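/- arXiv:2406.07802 — 4 statements merged into one kernel-verified Lean document; each statement's English description precedes it below -/
import Mathlib

section
/- If a graph G is n-edge bottlenecked, then the graph G' obtained from G by subdividing every edge exactly once is n-point bottlenecked. -/
open SimpleGraph

variable {V : Type}

/-- A set of vertices is connected if the induced subgraph is connected. -/
def ConnSet (G : SimpleGraph V) (X : Set V) : Prop := (G.induce X).Connected

/-- `G` is `n`-edge bottlenecked: any two disjoint connected vertex sets `X,Y`
admit a set of at most `n` edges meeting every `X,Y` path. -/
def EdgeBottlenecked (G : SimpleGraph V) (n : ℕ) : Prop :=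
  ∀ X Y : Set V, Disjoint X Y → ConnSet G X → ConnSet G Y →
    ∃ S : Finset (Sym2 V), S.card ≤ n ∧
      ∀ ⦃x y : V⦄ (p : G.Walk x y), x ∈ X → y ∈ Y → p.IsPath → ∃ e ∈ S, e ∈ p.edges

/-- `G` is `n`-point bottlenecked: any two disjoint connected vertex sets `X,Y`
admit a set of at most `n` vertices meeting every `X,Y` path. -/
def PointBottlenecked (G : SimpleGraph V) (n : ℕ) : Prop :=
  ∀ X Y : Set V, Disjoint X Y → ConnSet G X → ConnSet G Y →
    ∃ S : Finset V, S.card ≤ n ∧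
      ∀ ⦃x y : V⦄ (p : G.Walk x y), x ∈ X → y ∈ Y → p.IsPath → ∃ v ∈ S, v ∈ p.support

/-- An `n`-ladder: two disjoint connected poles `X,Y` and `n` rungs, i.e. `X,Y`
paths that are pairwise disjoint outside of `X ∪ Y`. -/
structure Ladder (G : SimpleGraph V) (n : ℕ) where
  X : Set V
  Y : Set V
  disj : Disjoint X Y
  connX : ConnSet G X
  connY : ConnSet G Y
  a : Fin n → V
  b : Fin n → V
  ha : ∀ i, a i ∈ X
  hb : ∀ i, b i ∈ Y
  p : (i : Fin n) → G.Walk (a i) (b i)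
  isPath : ∀ i, (p i).IsPath
  rungsDisj : ∀ i j, i ≠ j → ∀ v, v ∈ (p i).support → v ∈ (p j).support → v ∈ X ∪ Y

/-- `G` contains the dipole `D_k` as a minor: equivalently, `G` contains a `k`-ladder. -/
def HasDipoleMinor (G : SimpleGraph V) (k : ℕ) : Prop := Nonempty (Ladder G k)

/-- Two vertex sets are `M`-disjoint if every pair of points (one from each) is at
graph distance at least `M`. -/
def MDisjoint (G : SimpleGraph V) (M : ℕ) (X Y : Set V) : Prop :=
  ∀ x ∈ X, ∀ y ∈ Y, M ≤ G.dist x y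

/-- `G` is `M`-fat `n`-bottlenecked: any two connected `M`-disjoint sets `X,Y` admit
at most `n` vertices (outside `X ∪ Y`) whose open `M`-neighborhood meets every `X,Y` path. -/
def FatBottlenecked (G : SimpleGraph V) (M n : ℕ) : Prop :=
  ∀ X Y : Set V, ConnSet G X → ConnSet G Y → MDisjoint G M X Y →
    ∃ S : Finset V, S.card ≤ n ∧ (∀ s ∈ S, s ∉ X ∪ Y) ∧
      ∀ ⦃x y : V⦄ (p : G.Walk x y), x ∈ X → y ∈ Y → p.IsPath →
        ∃ v ∈ p.support, ∃ s ∈ S, G.dist v s < M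

/-- An `M`-fat `n`-ladder: an `n`-ladder whose poles are `M`-disjoint and whose
rungs are pairwise `M`-disjoint. -/
structure FatLadder (G : SimpleGraph V) (M n : ℕ) extends Ladder G n where
  polesFat : MDisjoint G M X Y
  rungsFat : ∀ i j, i ≠ j → ∀ u v, u ∈ (p i).support → v ∈ (p j).support → M ≤ G.dist u v

/-- `H` is a minor of `G`: branch sets in `G` (nonempty, connected, pairwise disjoint)
realize the vertices of `H`, and every edge of `H` is realized by an edge of `G`. -/
def IsMinor {W : Type} (G : SimpleGraph V) (H : SimpleGraph W) : Prop :=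
  ∃ B : W → Set V, (∀ w, (B w).Nonempty) ∧ (∀ w, ConnSet G (B w)) ∧
    (∀ w w', w ≠ w' → Disjoint (B w) (B w')) ∧
    (∀ ⦃w w'⦄, H.Adj w w' → ∃ u ∈ B w, ∃ v ∈ B w', G.Adj u v)

/-- `H` is an `M`-fat minor of `G`: a minor whose branch sets are pairwise `M`-disjoint
except where incident (adjacent) in `H`. -/
def IsFatMinor (G : SimpleGraph V) (M : ℕ) {W : Type} (H : SimpleGraph W) : Prop :=
  ∃ B : W → Set V, (∀ w, (B w).Nonempty) ∧ (∀ w, ConnSet G (B w)) ∧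
    (∀ w w', w ≠ w' → Disjoint (B w) (B w')) ∧
    (∀ w w', w ≠ w' → ¬ H.Adj w w' → MDisjoint G M (B w) (B w')) ∧
    (∀ ⦃w w'⦄, H.Adj w w' → ∃ u ∈ B w, ∃ v ∈ B w', G.Adj u v)

/-- The graph obtained from `G` by subdividing every edge exactly once: each edge is
replaced by a path of length two through a new vertex. -/
def Subdiv (G : SimpleGraph V) : SimpleGraph (V ⊕ G.edgeSet) where
  Adj a b :=
    match a, b with
    | Sum.inl v, Sum.inr e => v ∈ (e : Sym2 V)
    | Sum.inr e, Sum.inl v => v ∈ (e : Sym2 V)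
    | _, _ => False
  symm := ⟨by
    rintro (v | e) (w | f) h <;> simp_all⟩
  loopless := ⟨by
    rintro (v | e) h <;> simp_all⟩

/-! A connected vertex set of the subdivision is either a single subdivision vertex, which
separates on its own (and `n ≥ 1` as soon as `G` has an edge), or its original vertices form a
connected set of `G` next to all of its points. A path of the subdivision between two sets of the
second kind projects to a path of `G` between their original vertices whose edges are
subdivision vertices of the path, so the subdivision vertices of an edge separator between
these sets of original vertices form a point separator. -/

open Sum

lemma exists_walk_of_mem_edge {G : SimpleGraph V} {s : Sym2 V} (hs : s ∈ G.edgeSet) {u v : V}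
    (hu : u ∈ s) (hv : v ∈ s) :
    ∃ q : G.Walk u v, (∀ x ∈ q.support, x = u ∨ x = v) ∧ ∀ t ∈ q.edges, t = s := by
  by_cases huv : u = v
  · subst huv
    exact ⟨.nil, by simp, by simp⟩
  · obtain rfl : s = s(u, v) := (Sym2.mem_and_mem_iff huv).mp ⟨hu, hv⟩
    exact ⟨(G.mem_edgeSet.mp hs).toWalk, by simp, by simp⟩

lemma ConnSet.exists_walk_support_subset {G : SimpleGraph V} {X : Set V} (hX : ConnSet G X)
    {a b : V} (ha : a ∈ X) (hb : b ∈ X) :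
    ∃ p : G.Walk a b, ∀ c ∈ p.support, c ∈ X := by
  obtain ⟨r⟩ := hX.preconnected ⟨a, ha⟩ ⟨b, hb⟩
  refine ⟨r.map (Embedding.induce X).toHom, fun c hc => ?_⟩
  obtain ⟨⟨c, hcX⟩, -, rfl⟩ := List.mem_map.mp (Walk.support_map _ r ▸ hc)
  exact hcX

namespace Subdiv

variable {G : SimpleGraph V}

/-- The vertices of `G` equal to or adjacent to a given vertex of `Subdiv G`. -/
@[simp]
def base : V ⊕ G.edgeSet → Set V
  | inl v => {v}
  | inr e => {u | u ∈ (e : Sym2 V)}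

@[simp]
lemma adj_inl_inr_iff {v : V} {e : G.edgeSet} : (Subdiv G).Adj (inl v) (inr e) ↔ v ∈ (e : Sym2 V) :=
  Iff.rfl

@[simp]
lemma adj_inr_inl_iff {v : V} {e : G.edgeSet} : (Subdiv G).Adj (inr e) (inl v) ↔ v ∈ (e : Sym2 V) :=
  Iff.rfl

@[simp]
lemma not_adj_inl_inl {u v : V} : ¬ (Subdiv G).Adj (inl u) (inl v) := id

@[simp]
lemma not_adj_inr_inr {e f : G.edgeSet} : ¬ (Subdiv G).Adj (inr e) (inr f) := id

/-- A walk of `Subdiv G` projects to a walk of `G` through the original vertices it visits,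
using only edges whose subdivision vertices it visits. -/
theorem exists_walk_of_walk {a b : V ⊕ G.edgeSet} (p : (Subdiv G).Walk a b) {u w : V}
    (hu : u ∈ base a) (hw : w ∈ base b) :
    ∃ q : G.Walk u w, (∀ v ∈ q.support, v = u ∨ v = w ∨ inl v ∈ p.support) ∧
      ∀ s (hs : s ∈ q.edges), inr ⟨s, q.edges_subset_edgeSet hs⟩ ∈ p.support := by
  induction p generalizing u with
  | @nil a =>
    cases a with
    | inl v =>
      obtain ⟨rfl, rfl⟩ : u = v ∧ w = v := ⟨hu, hw⟩
      exact ⟨.nil, by simp, by simp⟩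
    | inr e =>
      obtain ⟨q, hq_support, hq_edges⟩ := exists_walk_of_mem_edge e.2 hu hw
      refine ⟨q, fun v hv => ?_, fun s hs => by simp [hq_edges s hs]⟩
      rcases hq_support v hv with h | h <;> simp [h]
  | @cons a c b hac p ih =>
    cases a with
    | inl u' =>
      obtain rfl : u = u' := hu
      obtain ⟨e, rfl⟩ : ∃ e, c = inr e := by cases c <;> simp_all
      obtain ⟨q, hq_support, hq_edges⟩ := ih (u := u) hac hw
      refine ⟨q, fun v hv => ?_, fun s hs => by simp [hq_edges s hs]⟩
      rcases hq_support v hv with h | h | h <;> simp [h]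
    | inr e =>
      obtain ⟨v, rfl⟩ : ∃ v, c = inl v := by cases c <;> simp_all
      obtain ⟨q₁, hq₁_support, hq₁_edges⟩ := ih (u := v) rfl hw
      obtain ⟨q₀, hq₀_support, hq₀_edges⟩ := exists_walk_of_mem_edge e.2 hu hac
      refine ⟨q₀.append q₁, fun x hx => ?_, fun s hs => ?_⟩
      · rcases (Walk.mem_support_append_iff _ _).mp hx with hx | hx
        · rcases hq₀_support x hx with h | h <;> simp [h]
        · rcases hq₁_support x hx with h | h | h <;> simp [h]
      · rcases List.mem_append.mp (Walk.edges_append _ _ ▸ hs) with hs | hs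
        · simp [hq₀_edges s hs]
        · simp [hq₁_edges s hs]

theorem connSet_preimage_inl {X : Set (V ⊕ G.edgeSet)} (hX : ConnSet (Subdiv G) X) {x₀ : V}
    (hx₀ : inl x₀ ∈ X) : ConnSet G (inl ⁻¹' X) := by
  refine G.induce_connected_of_patches x₀ hx₀ fun {v} hv => ?_
  obtain ⟨p, hp⟩ := hX.exists_walk_support_subset hx₀ hv
  obtain ⟨q, hq_support, -⟩ := exists_walk_of_walk p rfl rfl
  refine ⟨{x | x ∈ q.support}, fun x hx => ?_, q.start_mem_support, q.end_mem_support,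
    q.connected_induce_support.preconnected _ _⟩
  rcases hq_support x hx with rfl | rfl | h
  exacts [hx₀, hv, hp _ h]

theorem exists_mem_base_of_connSet {X : Set (V ⊕ G.edgeSet)} (hX : ConnSet (Subdiv G) X)
    {x₀ : V} (hx₀ : inl x₀ ∈ X) {a : V ⊕ G.edgeSet} (ha : a ∈ X) : ∃ u ∈ base a, inl u ∈ X := by
  cases a with
  | inl v => exact ⟨v, rfl, ha⟩
  | inr e =>
    obtain ⟨p, hp⟩ := hX.exists_walk_support_subset ha hx₀
    cases p with
    | @cons _ c _ hac p =>
      cases c with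
      | inl v => exact ⟨v, hac, hp _ (by simp)⟩
      | inr f => exact (not_adj_inr_inr hac).elim

theorem exists_inl_mem_or_eq_singleton_inr {X : Set (V ⊕ G.edgeSet)}
    (hX : ConnSet (Subdiv G) X) : (∃ v, inl v ∈ X) ∨ ∃ e, X = {inr e} := by
  refine or_iff_not_imp_left.mpr fun h => ?_
  obtain ⟨⟨a, ha⟩⟩ := hX.nonempty
  cases a with
  | inl v => exact (h ⟨v, ha⟩).elim
  | inr e =>
    refine ⟨e, Set.eq_singleton_iff_unique_mem.mpr ⟨ha, fun b hb => ?_⟩⟩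
    obtain ⟨p, hp⟩ := hX.exists_walk_support_subset ha hb
    cases p with
    | nil => rfl
    | @cons _ c _ hac p =>
      cases c with
      | inl v => exact (h ⟨v, hp _ (by simp)⟩).elim
      | inr f => exact (not_adj_inr_inr hac).elim

theorem exists_point_separator_of_edge_separator {X Y : Set (V ⊕ G.edgeSet)}
    (hX : ∀ a ∈ X, ∃ u ∈ base a, inl u ∈ X) (hY : ∀ b ∈ Y, ∃ w ∈ base b, inl w ∈ Y)
    {SE : Finset (Sym2 V)} (hSE : ∀ ⦃x y : V⦄ (p : G.Walk x y), x ∈ inl ⁻¹' X → y ∈ inl ⁻¹' Y →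
      p.IsPath → ∃ e ∈ SE, e ∈ p.edges) :
    ∃ S : Finset (V ⊕ G.edgeSet), S.card ≤ SE.card ∧
      ∀ ⦃x y⦄ (p : (Subdiv G).Walk x y), x ∈ X → y ∈ Y → ∃ v ∈ S, v ∈ p.support := by
  classical
  refine ⟨(SE.subtype (· ∈ G.edgeSet)).map .inr, ?_, fun x y p hx hy => ?_⟩
  · simpa [Finset.card_subtype] using Finset.card_filter_le _ _
  · obtain ⟨u, hu, huX⟩ := hX x hx
    obtain ⟨w, hw, hwY⟩ := hY y hy
    obtain ⟨q, -, hq_edges⟩ := exists_walk_of_walk p hu hw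
    obtain ⟨s, hsSE, hs⟩ := hSE q.bypass huX hwY q.bypass_isPath
    exact ⟨_, by simpa using hsSE, hq_edges s (q.edges_bypass_subset_edges hs)⟩

end Subdiv

open Subdiv

theorem EdgeBottlenecked.one_le {G : SimpleGraph V} {n : ℕ} (h : EdgeBottlenecked G n)
    {s : Sym2 V} (hs : s ∈ G.edgeSet) : 1 ≤ n := by
  induction s using Sym2.ind with
  | _ u w =>
    have huw : G.Adj u w := hs
    obtain ⟨S, hcard, hS⟩ := h {u} {w} (by simp [huw.ne]) (by simp [ConnSet]) (by simp [ConnSet])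
    obtain ⟨e, he, -⟩ := hS huw.toWalk rfl rfl huw.isPath_toWalk
    exact (Finset.card_pos.mpr ⟨e, he⟩).trans_le hcard

/-- If `G` is `n`-edge bottlenecked, then the graph obtained by subdividing every edge
of `G` exactly once is `n`-point bottlenecked. -/
theorem subdiv_pointBottlenecked (G : SimpleGraph V) (n : ℕ)
    (h : EdgeBottlenecked G n) : PointBottlenecked (Subdiv G) n := by
  intro X Y hXY hX hY
  rcases exists_inl_mem_or_eq_singleton_inr hX with ⟨x₀, hx₀⟩ | ⟨e, rfl⟩
  · rcases exists_inl_mem_or_eq_singleton_inr hY with ⟨y₀, hy₀⟩ | ⟨f, rfl⟩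
    · obtain ⟨SE, hcard, hSE⟩ := h _ _ (hXY.preimage inl) (connSet_preimage_inl hX hx₀)
        (connSet_preimage_inl hY hy₀)
      obtain ⟨S, hS_card, hS⟩ := exists_point_separator_of_edge_separator
        (fun _ => exists_mem_base_of_connSet hX hx₀) (fun _ => exists_mem_base_of_connSet hY hy₀)
        hSE
      exact ⟨S, hS_card.trans hcard, fun x y p hx hy _ => hS p hx hy⟩
    · exact ⟨{inr f}, by simpa using h.one_le f.2, fun _ _ p _ hy _ =>
        ⟨_, Finset.mem_singleton_self _, Set.mem_singleton_iff.mp hy ▸ p.end_mem_support⟩⟩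
  · exact ⟨{inr e}, by simpa using h.one_le e.2, fun _ _ p hx _ _ =>
      ⟨_, Finset.mem_singleton_self _, Set.mem_singleton_iff.mp hx ▸ p.start_mem_support⟩⟩
end

section
/- A connected graph is 1-edge bottlenecked if and only if it contains no cycle (i.e., it is a tree, in the sense of acyclic connected graph). -/
open SimpleGraph

variable {V : Type}

/-!
If `G` is `1`-edge bottlenecked and `uv` is an edge, separate `{u}` from `{v}`: the single
bottleneck edge lies on the one-edge path, so it is `uv`, and it lies on every other `u`–`v`
path too. Hence every edge is a bridge.

Conversely, in a tree take the edge `uu'` at which the path from `x₀ ∈ X` to `y₀ ∈ Y` leaves `X`.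
Any `X`–`Y` path, extended by walks inside `X` and inside `Y`, is a walk from `x₀` to `y₀` and so
contains every edge of that unique path; `uu'` cannot lie on the part inside `X` (as `u' ∉ X`)
nor on the part inside `Y` (as `u ∈ X`).
-/

namespace SimpleGraph

variable {G : SimpleGraph V}

lemma connSet_singleton (G : SimpleGraph V) (v : V) : ConnSet G {v} :=
  Connected.of_subsingleton

lemma ConnSet.exists_walk_support_subset {X : Set V} (hX : ConnSet G X) {u v : V}
    (hu : u ∈ X) (hv : v ∈ X) : ∃ w : G.Walk u v, ∀ z ∈ w.support, z ∈ X := by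
  obtain ⟨q⟩ := hX.preconnected ⟨u, hu⟩ ⟨v, hv⟩
  refine ⟨q.map (Embedding.induce X).toHom, fun z hz => ?_⟩
  replace hz : z ∈ (q.map (Embedding.induce X).toHom).support := hz
  rw [Walk.support_map, List.mem_map] at hz
  obtain ⟨z', _, rfl⟩ := hz
  exact z'.2

lemma IsAcyclic.edges_subset_edges_of_isPath (hG : G.IsAcyclic) {u v : V} {p q : G.Walk u v}
    (hp : p.IsPath) : p.edges ⊆ q.edges := by
  classical
  have : p = q.toPath := congrArg Subtype.val ((hG.subsingleton_path u v).elim ⟨p, hp⟩ _)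
  exact this ▸ q.edges_toPath_subset_edges

lemma EdgeBottlenecked.isBridge (h : EdgeBottlenecked G 1) {u v : V} (huv : G.Adj u v) :
    G.IsBridge s(u, v) := by
  classical
  refine isBridge_iff_forall_walk_mem_edges.2 fun q => ?_
  obtain ⟨S, hS, hcut⟩ := h {u} {v} (Set.disjoint_singleton.2 huv.ne)
    (connSet_singleton G u) (connSet_singleton G v)
  obtain ⟨e, he, he_edge⟩ := hcut huv.toWalk rfl rfl (by simp [huv.ne])
  obtain ⟨e', he', he'_q⟩ := hcut q.toPath.val rfl rfl q.toPath.2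
  have hee' : e = e' := Finset.card_le_one.1 hS _ he _ he'
  simp only [Adj.edges_toWalk, List.mem_singleton] at he_edge
  exact q.edges_toPath_subset_edges (he_edge ▸ hee' ▸ he'_q)

lemma EdgeBottlenecked.isAcyclic (h : EdgeBottlenecked G 1) : G.IsAcyclic :=
  isAcyclic_iff_forall_adj_isBridge.2 fun _ _ huv => h.isBridge huv

lemma IsAcyclic.edgeBottlenecked_one (hac : G.IsAcyclic) (hG : G.Connected) :
    EdgeBottlenecked G 1 := by
  classical
  intro X Y hXY hX hY
  obtain ⟨⟨x₀, hx₀⟩⟩ := hX.nonempty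
  obtain ⟨⟨y₀, hy₀⟩⟩ := hY.nonempty
  let w := (hG.preconnected x₀ y₀).some.toPath
  obtain ⟨⟨⟨u, u'⟩, _⟩, hd, hu, hu'⟩ :=
    w.val.exists_boundary_dart X hx₀ (Set.disjoint_right.1 hXY hy₀)
  refine ⟨{s(u, u')}, by simp, fun x y p hx hy _ => ⟨s(u, u'), Finset.mem_singleton_self _, ?_⟩⟩
  obtain ⟨wx, hwx⟩ := hX.exists_walk_support_subset hx₀ hx
  obtain ⟨wy, hwy⟩ := hY.exists_walk_support_subset hy hy₀
  have he : s(u, u') ∈ (wx.append (p.append wy)).edges :=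
    hac.edges_subset_edges_of_isPath w.2 (List.mem_map_of_mem hd)
  simp only [Walk.edges_append, List.mem_append] at he
  rcases he with h | h | h
  · exact absurd (hwx _ (Walk.snd_mem_support_of_mem_edges _ h)) hu'
  · exact h
  · exact absurd (hwy _ (Walk.fst_mem_support_of_mem_edges _ h)) (Set.disjoint_left.1 hXY hu)

end SimpleGraph

/-- A connected graph is `1`-edge bottlenecked iff it contains no cycle. -/
theorem oneBottlenecked_iff_acyclic (G : SimpleGraph V) (hG : G.Connected) :
    EdgeBottlenecked G 1 ↔ G.IsAcyclic :=
  ⟨EdgeBottlenecked.isAcyclic, fun hac => hac.edgeBottlenecked_one hG⟩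
end

section
/- If a graph G is m-fat (n+1)-bottlenecked but not coarsely n-bottlenecked, then for every M there exists an M-fat (n+1)-ladder in G; i.e., G contains D_{n+1} as an asymptotic minor. -/
/-!
Fix `M` and put `R = M + m`. As `G` is not `3(M + m)`-fat `n`-bottlenecked, there are connected,
`3(M + m)`-disjoint `X, Y` that no `n` vertices separate at that scale, while `m`-fat
`(n + 1)`-bottlenecking gives `n + 1` vertices `sᵢ` separating them at scale `m`. Dropping `sᵢ`
leaves an `X`–`Y` walk `Pᵢ` that is `3(M + m)`-far from the other `sⱼ`, so `Pᵢ` passes within `m`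
of `sᵢ`, and hence the `sᵢ` are more than `3M + 2m` apart. Cut each `Pᵢ` where it first enters,
from either end, the closed `R`-ball around `sᵢ`: the two outer pieces are added to the poles and
the rung joins the cut points inside that ball. Rungs in different balls are `M`-disjoint, and a
path of length `< M` between the new poles would extend to an `X`–`Y` walk avoiding every
`N_m(sᵢ)`.
-/

open SimpleGraph

variable {V : Type}

namespace SimpleGraph

variable {G : SimpleGraph V}

/-- `G.FarFrom r T v` says that `v ∉ N_r(T)`. -/
def FarFrom (G : SimpleGraph V) (r : ℕ) (T : Set V) (v : V) : Prop :=
  ∀ t ∈ T, r ≤ G.dist v t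

theorem FarFrom.mono {r r' : ℕ} {T : Set V} {v : V} (h : G.FarFrom r T v) (hr : r' ≤ r) :
    G.FarFrom r' T v := fun t ht => hr.trans (h t ht)

theorem FarFrom.of_dist_le (hG : G.Connected) {r k : ℕ} {T : Set V} {u v : V}
    (hu : G.FarFrom (k + r) T u) (huv : G.dist u v ≤ k) : G.FarFrom r T v := fun t ht => by
  have := hu t ht
  have := hG.dist_triangle (u := u) (v := v) (w := t)
  omega

def NbhdSeparates (G : SimpleGraph V) (m : ℕ) (T X Y : Set V) : Prop :=
  ∀ x ∈ X, ∀ y ∈ Y, ∀ w : G.Walk x y, ∃ v ∈ w.support, ¬ G.FarFrom m T v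

namespace Walk

theorem dist_start_le_length {u v w : V} (p : G.Walk u v) (hw : w ∈ p.support) :
    G.dist u w ≤ p.length := by
  classical
  exact (dist_le _).trans (p.length_takeUntil_le_length hw)

theorem dist_end_le_length {u v w : V} (p : G.Walk u v) (hw : w ∈ p.support) :
    G.dist w v ≤ p.length := by
  classical
  exact (dist_le _).trans (p.length_dropUntil_le_length hw)

theorem forall_mem_support_append {P : V → Prop} {u v w : V} (p : G.Walk u v) (q : G.Walk v w)
    (hp : ∀ x ∈ p.support, P x) (hq : ∀ x ∈ q.support, P x) :
    ∀ x ∈ (p.append q).support, P x := fun x hx =>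
  ((mem_support_append_iff p q).1 hx).elim (hp x) (hq x)

theorem exists_far_walk_into_ball {x y s : V} {R : ℕ} (p : G.Walk x y) (hx : R < G.dist x s)
    (hp : ∃ v ∈ p.support, G.dist v s ≤ R) :
    ∃ (a : V) (q : G.Walk x a), G.dist a s ≤ R ∧ q.support ⊆ p.support ∧
      ∀ v ∈ q.support, R ≤ G.dist v s := by
  induction p with
  | nil =>
    obtain ⟨v, hv, hvs⟩ := hp
    rw [support_nil, List.mem_singleton] at hv
    subst hv
    omega
  | @cons x x' y hadj p ih =>
    by_cases hx' : G.dist x' s ≤ R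
    · have hstep : G.dist x s ≤ 1 + G.dist x' s := by
        simpa [dist_eq_one_iff_adj.2 hadj] using hadj.reachable.dist_triangle_left s
      refine ⟨x', cons hadj nil, hx', ?_, ?_⟩
      · simp [List.subset_def]
      · simp only [support_cons, support_nil, List.mem_cons, List.not_mem_nil, or_false]
        rintro v (rfl | rfl) <;> omega
    · obtain ⟨v, hv, hvs⟩ := hp
      have hv' : v ∈ p.support := by
        rcases (mem_support_iff _).1 hv with rfl | hv
        · omega
        · exact hv
      obtain ⟨a, q, ha, hqp, hq⟩ := ih (not_le.1 hx') ⟨v, hv', hvs⟩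
      refine ⟨a, cons hadj q, ha, List.cons_subset_cons _ hqp, ?_⟩
      simp only [support_cons, List.mem_cons]
      rintro w (rfl | hw)
      · omega
      · exact hq w hw

theorem exists_walk_into_ball {x y s : V} {R : ℕ} (p : G.Walk x y)
    (hp : ∃ v ∈ p.support, G.dist v s ≤ R) :
    ∃ (a : V) (q : G.Walk x a), G.dist a s ≤ R ∧ q.support ⊆ p.support ∧
      (q.Nil ∨ ∀ v ∈ q.support, R ≤ G.dist v s) := by
  by_cases hx : G.dist x s ≤ R
  · exact ⟨x, nil, hx, by simp, Or.inl nil_nil⟩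
  · obtain ⟨a, q, ha, hqp, hq⟩ := p.exists_far_walk_into_ball (not_le.1 hx) hp
    exact ⟨a, q, ha, hqp, Or.inr hq⟩

end Walk

theorem Connected.exists_isPath_dist_le (hG : G.Connected) {a b s : V} {R : ℕ}
    (ha : G.dist a s ≤ R) (hb : G.dist b s ≤ R) :
    ∃ p : G.Walk a b, p.IsPath ∧ ∀ v ∈ p.support, G.dist v s ≤ R := by
  classical
  obtain ⟨p₁, hp₁⟩ := hG.exists_walk_length_eq_dist a s
  obtain ⟨p₂, hp₂⟩ := hG.exists_walk_length_eq_dist s b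
  refine ⟨(p₁.append p₂).bypass, Walk.bypass_isPath _, fun v hv => ?_⟩
  rcases (Walk.mem_support_append_iff p₁ p₂).1 (Walk.support_bypass_subset_support _ hv) with
    hv | hv
  · exact (p₁.dist_end_le_length hv).trans (hp₁ ▸ ha)
  · rw [dist_comm]
    exact (p₂.dist_start_le_length hv).trans (hp₂ ▸ dist_comm (G := G) ▸ hb)

end SimpleGraph

open SimpleGraph

variable {G : SimpleGraph V}

theorem MDisjoint.mono {M M' : ℕ} {X Y : Set V} (h : MDisjoint G M X Y) (hM : M' ≤ M) :
    MDisjoint G M' X Y := fun x hx y hy => hM.trans (h x hx y hy)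

theorem ConnSet.union_iUnion_support {ι : Type*} {X : Set V} (hX : ConnSet G X) {x a : ι → V}
    (hx : ∀ i, x i ∈ X) (q : ∀ i, G.Walk (x i) (a i)) :
    ConnSet G (X ∪ ⋃ i, {v | v ∈ (q i).support}) := by
  obtain ⟨⟨x₀, hx₀⟩⟩ := hX.nonempty
  refine induce_connected_of_patches x₀ (Or.inl hx₀) fun {v} hv => ?_
  rcases hv with hv | hv
  · exact ⟨X, Set.subset_union_left, hx₀, hv, hX.preconnected _ _⟩
  · obtain ⟨i, hi⟩ := Set.mem_iUnion.1 hv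
    refine ⟨X ∪ {v | v ∈ (q i).support},
      Set.union_subset_union_right _ (Set.subset_iUnion (fun i => {v | v ∈ (q i).support}) i),
      Or.inl hx₀, Or.inr hi, ?_⟩
    exact (induce_union_connected hX.preconnected (q i).connected_induce_support.preconnected
      ⟨x i, hx i, (q i).start_mem_support⟩).preconnected _ _

theorem exists_far_walk_of_mem_union_iUnion_support {ι : Type*} {X T : Set V} {r : ℕ}
    {x a : ι → V} (hx : ∀ i, x i ∈ X) (q : ∀ i, G.Walk (x i) (a i))
    (hq : ∀ i, (q i).Nil ∨ ∀ v ∈ (q i).support, G.FarFrom r T v) :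
    ∀ v ∈ X ∪ ⋃ i, {v | v ∈ (q i).support},
      v ∈ X ∨ ∃ x ∈ X, ∃ w : G.Walk x v, ∀ u ∈ w.support, G.FarFrom r T u := by
  classical
  rintro v (hv | hv)
  · exact Or.inl hv
  · obtain ⟨i, hi⟩ := Set.mem_iUnion.1 hv
    rcases hq i with hnil | hfar
    · rw [Walk.nil_iff_support_eq.1 hnil, Set.mem_ofPred_eq, List.mem_singleton] at hi
      exact Or.inl (hi ▸ hx i)
    · exact Or.inr ⟨x i, hx i, (q i).takeUntil v hi,
        fun u hu => hfar u ((q i).support_takeUntil_subset_support hi hu)⟩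

theorem mDisjoint_of_far_walks (hG : G.Connected) {M m : ℕ} {T X Y X' Y' : Set V}
    (hXY : MDisjoint G M X Y) (hsep : G.NbhdSeparates m T X Y)
    (hX' : ∀ v ∈ X', v ∈ X ∨ ∃ x ∈ X, ∃ w : G.Walk x v, ∀ u ∈ w.support, G.FarFrom (M + m) T u)
    (hY' : ∀ v ∈ Y', v ∈ Y ∨ ∃ y ∈ Y, ∃ w : G.Walk y v, ∀ u ∈ w.support, G.FarFrom (M + m) T u) :
    MDisjoint G M X' Y' := by
  intro v hv v' hv'
  by_contra! hlt
  obtain ⟨γ, hγ⟩ := hG.exists_walk_length_eq_dist v v'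
  have hnot_far : ∀ {x y} (w : G.Walk x y), x ∈ X → y ∈ Y → ¬ ∀ u ∈ w.support, G.FarFrom m T u :=
    fun w hx hy hfar => by
      obtain ⟨u, hu, hnf⟩ := hsep _ hx _ hy w
      exact hnf (hfar u hu)
  have hγ_far : G.FarFrom (M + m) T v ∨ G.FarFrom (M + m) T v' →
      ∀ u ∈ γ.support, G.FarFrom m T u := by
    rintro (h | h) u hu
    · exact h.of_dist_le hG ((γ.dist_start_le_length hu).trans (hγ ▸ hlt.le))
    · exact h.of_dist_le hG (dist_comm (G := G) ▸ (γ.dist_end_le_length hu).trans (hγ ▸ hlt.le))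
  have hfar_mono : ∀ {x y} (w : G.Walk x y), (∀ u ∈ w.support, G.FarFrom (M + m) T u) →
      ∀ u ∈ w.support, G.FarFrom m T u :=
    fun w h u hu => (h u hu).mono (Nat.le_add_left m M)
  rcases hX' v hv with hvX | ⟨x, hx, wx, hwx⟩ <;> rcases hY' v' hv' with hvY | ⟨y, hy, wy, hwy⟩
  · exact (hXY v hvX v' hvY).not_gt hlt
  · exact hnot_far (γ.append wy.reverse) hvX hy (Walk.forall_mem_support_append _ _
      (hγ_far (Or.inr (hwy v' wy.end_mem_support)))
      (by simpa using hfar_mono wy hwy))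
  · exact hnot_far (wx.append γ) hx hvY (Walk.forall_mem_support_append _ _ (hfar_mono wx hwx)
      (hγ_far (Or.inl (hwx v wx.end_mem_support))))
  · exact hnot_far (wx.append (γ.append wy.reverse)) hx hy
      (Walk.forall_mem_support_append _ _ (hfar_mono wx hwx)
        (Walk.forall_mem_support_append _ _ (hγ_far (Or.inl (hwx v wx.end_mem_support)))
          (by simpa using hfar_mono wy hwy)))

def FatLadder.mono {M M' k : ℕ} (L : FatLadder G M k) (h : M' ≤ M) : FatLadder G M' k where
  toLadder := L.toLadder
  polesFat := L.polesFat.mono h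
  rungsFat i j hij u v hu hv := h.trans (L.rungsFat i j hij u v hu hv)

theorem nonempty_fatLadder_of_rungs_in_balls (hG : G.Connected) {M R k : ℕ} (hM : 0 < M)
    {X Y : Set V} (hX : ConnSet G X) (hY : ConnSet G Y) (hXY : MDisjoint G M X Y)
    {s a b : Fin k → V} (ha : ∀ i, a i ∈ X) (hb : ∀ i, b i ∈ Y) (r : ∀ i, G.Walk (a i) (b i))
    (hr : ∀ i, (r i).IsPath) (hball : ∀ i, ∀ v ∈ (r i).support, G.dist v (s i) ≤ R)
    (hspread : ∀ i j, i ≠ j → M + 2 * R ≤ G.dist (s i) (s j)) :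
    Nonempty (FatLadder G M k) := by
  have hfat : ∀ i j, i ≠ j → ∀ u v, u ∈ (r i).support → v ∈ (r j).support → M ≤ G.dist u v := by
    intro i j hij u v hu hv
    have := hball i u hu
    have := hball j v hv
    have := hspread i j hij
    have := hG.dist_triangle (u := s i) (v := u) (w := s j)
    have := hG.dist_triangle (u := u) (v := v) (w := s j)
    have : G.dist (s i) u = G.dist u (s i) := dist_comm
    omega
  have hdisj : Disjoint X Y := Set.disjoint_left.2 fun v hvX hvY => by
    simpa [hM.ne'] using hXY v hvX v hvY
  exact ⟨⟨⟨X, Y, hdisj, hX, hY, a, b, ha, hb, r, hr, fun i j hij v hv hv' => by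
    simpa [hM.ne'] using hfat i j hij v v hv hv'⟩, hXY, hfat⟩⟩

theorem exists_dist_lt_of_separating {m k : ℕ} {X Y : Set V} {s : Fin k → V}
    (hsep : G.NbhdSeparates m (Set.range s) X Y)
    {i : Fin k} {x y : V} (hx : x ∈ X) (hy : y ∈ Y) (w : G.Walk x y)
    (hw : ∀ v ∈ w.support, ∀ j ≠ i, m ≤ G.dist v (s j)) :
    ∃ v ∈ w.support, G.dist v (s i) < m := by
  obtain ⟨v, hv, hnf⟩ := hsep x hx y hy w
  simp only [FarFrom, Set.forall_mem_range, not_forall, not_le] at hnf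
  obtain ⟨j, hj⟩ := hnf
  obtain rfl : j = i := by
    by_contra hji
    exact (hw v hv j hji).not_gt hj
  exact ⟨v, hv, hj⟩

theorem exists_fatLadder_of_far_walks (hG : G.Connected) {M m k : ℕ} (hM : 0 < M)
    {X Y : Set V} (hX : ConnSet G X) (hY : ConnSet G Y) (hXY : MDisjoint G M X Y)
    {s : Fin k → V} (hsep : G.NbhdSeparates m (Set.range s) X Y)
    (hwalks : ∀ i, ∃ x ∈ X, ∃ y ∈ Y, ∃ w : G.Walk x y,
      ∀ v ∈ w.support, ∀ j ≠ i, 3 * (M + m) ≤ G.dist v (s j)) :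
    Nonempty (FatLadder G M k) := by
  choose x hx y hy P hP using hwalks
  have hnear : ∀ i, ∃ v ∈ (P i).support, G.dist v (s i) < m := fun i =>
    exists_dist_lt_of_separating hsep (hx i) (hy i) (P i) fun v hv j hji =>
      le_trans (by omega) (hP i v hv j hji)
  have hspread : ∀ i j, i ≠ j → M + 2 * (M + m) ≤ G.dist (s i) (s j) := by
    intro i j hij
    obtain ⟨v, hv, hvj⟩ := hnear j
    have := hP j v hv i hij
    have := hG.dist_triangle (u := v) (v := s j) (w := s i)
    rw [dist_comm (u := s j)] at this
    omega
  have hfar : ∀ i, ∀ v ∈ (P i).support, M + m ≤ G.dist v (s i) →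
      G.FarFrom (M + m) (Set.range s) v := by
    rintro i v hv hvi _ ⟨j, rfl⟩
    by_cases hji : j = i
    · exact hji ▸ hvi
    · have := hP i v hv j hji
      omega
  have hnear' : ∀ i, ∃ v ∈ (P i).support, G.dist v (s i) ≤ M + m :=
    fun i => (hnear i).imp fun v ⟨hv, h⟩ => ⟨hv, by omega⟩
  choose a qa ha hqaP hqa using fun i => (P i).exists_walk_into_ball (hnear' i)
  choose b qb hb hqbP hqb using fun i => (P i).reverse.exists_walk_into_ball
    (by simpa using hnear' i)
  choose r hr hball using fun i => hG.exists_isPath_dist_le (ha i) (hb i)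
  have hqbP' : ∀ i, ∀ v ∈ (qb i).support, v ∈ (P i).support := fun i v hv => by
    simpa using hqbP i hv
  exact nonempty_fatLadder_of_rungs_in_balls hG hM (hX.union_iUnion_support hx qa)
    (hY.union_iUnion_support hy qb)
    (mDisjoint_of_far_walks hG hXY hsep
      (exists_far_walk_of_mem_union_iUnion_support hx qa fun i =>
        (hqa i).imp_right fun h v hv => hfar i v (hqaP i hv) (h v hv))
      (exists_far_walk_of_mem_union_iUnion_support hy qb fun i =>
        (hqb i).imp_right fun h v hv => hfar i v (hqbP' i v hv) (h v hv)))
    (fun i => Or.inr (Set.mem_iUnion.2 ⟨i, (qa i).end_mem_support⟩))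
    (fun i => Or.inr (Set.mem_iUnion.2 ⟨i, (qb i).end_mem_support⟩)) r hr hball hspread

theorem exists_far_walks_of_not_fatBottlenecked {m n M' : ℕ} (hm : m ≤ M')
    (h₁ : FatBottlenecked G m (n + 1)) (h₂ : ¬ FatBottlenecked G M' n) :
    ∃ X Y : Set V, ConnSet G X ∧ ConnSet G Y ∧ MDisjoint G M' X Y ∧ ∃ s : Fin (n + 1) → V,
      G.NbhdSeparates m (Set.range s) X Y ∧
      ∀ i, ∃ x ∈ X, ∃ y ∈ Y, ∃ w : G.Walk x y, ∀ v ∈ w.support, ∀ j ≠ i, M' ≤ G.dist v (s j) := by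
  classical
  simp only [FatBottlenecked, not_forall, not_exists, not_and, not_lt] at h₂
  obtain ⟨X, Y, hX, hY, hXY, hbad⟩ := h₂
  obtain ⟨S, hS, hSout, hSsep⟩ := h₁ X Y hX hY (hXY.mono hm)
  have hsep : ∀ x ∈ X, ∀ y ∈ Y, ∀ w : G.Walk x y, ∃ v ∈ w.support, ∃ t ∈ S, G.dist v t < m :=
    fun x hx y hy w => (hSsep w.bypass hx hy w.bypass_isPath).imp fun v ⟨hv, h⟩ =>
      ⟨w.support_bypass_subset_support hv, h⟩
  have hcard : S.card = n + 1 := by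
    refine le_antisymm hS (not_lt.1 fun hlt => ?_)
    obtain ⟨x, y, w, hx, hy, -, hw⟩ := hbad S (by omega) hSout
    obtain ⟨v, hv, t, ht, hvt⟩ := hsep x hx y hy w
    have := hw v hv t ht
    omega
  let e := (S.equivFinOfCardEq hcard).symm
  refine ⟨X, Y, hX, hY, hXY, fun i => e i, fun x hx y hy w => ?_, fun i => ?_⟩
  · obtain ⟨v, hv, t, ht, hvt⟩ := hsep x hx y hy w
    exact ⟨v, hv, fun h => (h t ⟨e.symm ⟨t, ht⟩, by simp⟩).not_gt hvt⟩
  · obtain ⟨x, y, w, hx, hy, -, hw⟩ := hbad (S.erase (e i))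
      (by rw [Finset.card_erase_of_mem (e i).2]; omega)
      (fun t ht => hSout t (Finset.mem_of_mem_erase ht))
    exact ⟨x, hx, y, hy, w, fun v hv j hji => hw v hv _
      (Finset.mem_erase.2 ⟨fun h => hji (e.injective (Subtype.ext h)), (e j).2⟩)⟩

/-- Coarse Menger-type theorem: if a connected graph `G` is `m`-fat
`(n+1)`-bottlenecked but not coarsely `n`-bottlenecked, then for every `M` the
graph contains an `M`-fat `(n+1)`-ladder, i.e. `D_{n+1}` as an asymptotic minor. -/
theorem coarseMengerType (G : SimpleGraph V) (hG : G.Connected) (m n : ℕ)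
    (h₁ : FatBottlenecked G m (n + 1)) (h₂ : ¬ ∃ M, FatBottlenecked G M n) :
    ∀ M, Nonempty (FatLadder G M (n + 1)) := by
  intro M
  obtain ⟨X, Y, hX, hY, hXY, s, hsep, hwalks⟩ :=
    exists_far_walks_of_not_fatBottlenecked (M' := 3 * (M + 1 + m)) (by omega) h₁
      fun h => h₂ ⟨_, h⟩
  obtain ⟨L⟩ := exists_fatLadder_of_far_walks hG M.succ_pos hX hY (hXY.mono (by omega)) hsep
    hwalks
  exact ⟨L.mono M.le_succ⟩
end

section
/- Let G be m-fat (n+1)-bottlenecked, and suppose X,Y are connected B-disjoint subsets with B > 2(M+m+1) such that no collection of n balls of radius B meets every X,Y path. If r_1,...,r_{n+1} are vertices such that the m-neighborhood of {r_1,...,r_{n+1}} meets every X,Y path, then d(r_i, r_j) > 2(B - m) for all i ≠ j. -/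
/-!
If two of the `r i` were at distance at most `2(B - m)`, a midpoint `v` of a geodesic between
them would lie within `B - m` of both. Replacing the two by `v` leaves `n` centres, and by the
triangle inequality their `B`-neighbourhoods still meet every `X,Y` path, which is excluded.
-/

open SimpleGraph

variable {V : Type}

open Finset

namespace SimpleGraph

theorem Reachable.exists_dist_le_of_dist_le_add {G : SimpleGraph V} {u w : V}
    (h : G.Reachable u w) {a b : ℕ} (hab : G.dist u w ≤ a + b) :
    ∃ v, G.dist u v ≤ a ∧ G.dist v w ≤ b := by
  obtain ⟨p, hp⟩ := h.exists_walk_length_eq_dist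
  refine ⟨p.getVert a, ?_, ?_⟩
  · calc G.dist u (p.getVert a) ≤ (p.take a).length := dist_le _
      _ ≤ a := by rw [Walk.take_length]; exact min_le_left _ _
  · calc G.dist (p.getVert a) w ≤ (p.drop a).length := dist_le _
      _ ≤ b := by rw [Walk.drop_length]; omega

variable {ι : Type} [Fintype ι] [DecidableEq ι] [DecidableEq V]

theorem card_insert_image_erase_erase_le (r : ι → V) (v : V) {i j : ι} (hij : i ≠ j) :
    (insert v (((univ.erase i).erase j).image r)).card ≤ Fintype.card ι - 1 := by
  have hj : j ∈ univ.erase i := mem_erase.mpr ⟨hij.symm, mem_univ j⟩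
  have hcard : ((univ.erase i).erase j).card = Fintype.card ι - 2 := by
    rw [card_erase_of_mem hj, card_erase_of_mem (mem_univ i), card_univ]
    omega
  have htwo : 2 ≤ Fintype.card ι := (card_pair hij).symm.trans_le (card_le_univ _)
  calc (insert v (((univ.erase i).erase j).image r)).card
      ≤ (((univ.erase i).erase j).image r).card + 1 := card_insert_le _ _
    _ ≤ ((univ.erase i).erase j).card + 1 := by gcongr; exact card_image_le
    _ ≤ Fintype.card ι - 1 := by omega

theorem Connected.exists_mem_insert_image_dist_lt {G : SimpleGraph V} (hG : G.Connected)
    {r : ι → V} {i j : ι} {v : V} {k m : ℕ} (hi : G.dist (r i) v ≤ k) (hj : G.dist (r j) v ≤ k)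
    {w : V} {l : ι} (hw : G.dist w (r l) < m) :
    ∃ s ∈ insert v (((univ.erase i).erase j).image r), G.dist w s < m + k := by
  by_cases hl : l = i ∨ l = j
  · refine ⟨v, mem_insert_self _ _, ?_⟩
    have htri : G.dist w v ≤ G.dist w (r l) + G.dist (r l) v := hG.dist_triangle
    rcases hl with rfl | rfl <;> omega
  · push Not at hl
    refine ⟨r l, mem_insert_of_mem (mem_image_of_mem r ?_), by omega⟩
    exact mem_erase.mpr ⟨hl.2, mem_erase.mpr ⟨hl.1, mem_univ l⟩⟩

end SimpleGraph

theorem separators_far_apart_general (G : SimpleGraph V) (hG : G.Connected)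
    (m n M B : ℕ)
    (X Y : Set V)
    (hB : B > 2 * (M + m + 1))
    (hno : ¬ ∃ S : Finset V, S.card ≤ n ∧
      ∀ ⦃x y : V⦄ (p : G.Walk x y), x ∈ X → y ∈ Y → p.IsPath →
        ∃ w ∈ p.support, ∃ s ∈ S, G.dist w s < B)
    (r : Fin (n + 1) → V)
    (hr : ∀ ⦃x y : V⦄ (p : G.Walk x y), x ∈ X → y ∈ Y → p.IsPath →
      ∃ w ∈ p.support, ∃ i, G.dist w (r i) < m) :
    ∀ i j, i ≠ j → 2 * (B - m) < G.dist (r i) (r j) := by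
  classical
  intro i j hij
  by_contra! hclose
  obtain ⟨v, hvi, hvj⟩ := (hG (r i) (r j)).exists_dist_le_of_dist_le_add (a := B - m)
    (b := B - m) (by omega)
  rw [dist_comm] at hvj
  refine hno ⟨_, by simpa using card_insert_image_erase_erase_le r v hij, ?_⟩
  intro x y p hx hy hp
  obtain ⟨w, hw, l, hwl⟩ := hr p hx hy hp
  obtain ⟨s, hs, hws⟩ := hG.exists_mem_insert_image_dist_lt hvi hvj hwl
  exact ⟨w, hw, s, hs, by omega⟩

/-- In the proof of the coarse Menger-type theorem: the separating vertices
`r i` are pairwise at distance more than `2(B - m)`. -/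
theorem separators_far_apart (G : SimpleGraph V) (hG : G.Connected)
    (m n M B : ℕ) (hmf : FatBottlenecked G m (n + 1))
    (X Y : Set V) (hX : ConnSet G X) (hY : ConnSet G Y)
    (hdisj : MDisjoint G B X Y) (hB : B > 2 * (M + m + 1))
    (hno : ¬ ∃ S : Finset V, S.card ≤ n ∧
      ∀ ⦃x y : V⦄ (p : G.Walk x y), x ∈ X → y ∈ Y → p.IsPath →
        ∃ w ∈ p.support, ∃ s ∈ S, G.dist w s < B)
    (r : Fin (n + 1) → V)
    (hr : ∀ ⦃x y : V⦄ (p : G.Walk x y), x ∈ X → y ∈ Y → p.IsPath →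
      ∃ w ∈ p.support, ∃ i, G.dist w (r i) < m) :
    ∀ i j, i ≠ j → 2 * (B - m) < G.dist (r i) (r j) :=
  separators_far_apart_general G hG m n M B X Y hB hno r hr
end
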